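/- Let Ω ⊂ ℝⁿ be a bounded convex domain and u, v ∈ C(closure Ω) convex functions such that u ≥ v on ∂Ω and μ_u({u < v}) = 0. Then u ≥ v everywhere in Ω. -/

import Mathlib

open Set MeasureTheory
open scoped RealInnerProductSpace

/-!
Suppose `u x₀ < v x₀`. Lowering `v` to `w = v + ε (‖· - x₀‖² - R²)`, with `closure Ω` inside the
ball of radius `R` around `x₀` and `ε` small, keeps `w ≤ v` on `closure Ω` and `u x₀ < w x₀`, and
makes `w` uniformly convex at `x₀`. So every slope `p` close to a subgradient of `w` at `x₀`
supports `w` at some point of `{u < w}`. Lowering a plane of slope `p` until it touches `u` from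
below, the contact point lies in `{u < w}`, since `w ≤ u` on `∂Ω`; hence `p ∈ ∂u({u < w})`.
A ball of slopes thus lies in `∂u({u < v})`, which has measure zero.
-/

/-- The image of a set `S` under the subdifferential of `u` (relative to the domain `Ω`). -/
def subdiffImage {n : ℕ} (Ω : Set (EuclideanSpace ℝ (Fin n)))
    (u : EuclideanSpace ℝ (Fin n) → ℝ) (S : Set (EuclideanSpace ℝ (Fin n))) :
    Set (EuclideanSpace ℝ (Fin n)) :=
  ⋃ x ∈ S, {p | ∀ y ∈ Ω, u x + ⟪p, y - x⟫ ≤ u y}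

section Subgradient

variable {E : Type*} [NormedAddCommGroup E] [NormedSpace ℝ E]

-- Separate `(x₀, v x₀)` from the open strict epigraph by `f (y, t) = φ y + t c`; then `c < 0`
-- and `(-c)⁻¹ • φ` is a subgradient.
theorem ConvexOn.exists_subgradient {Ω : Set E} {v : E → ℝ} (hv : ConvexOn ℝ Ω v)
    (hΩ : IsOpen Ω) (hv_cont : ContinuousOn v Ω) {x₀ : E} (hx₀ : x₀ ∈ Ω) :
    ∃ φ : StrongDual ℝ E, ∀ y ∈ Ω, v x₀ + φ (y - x₀) ≤ v y := by
  have hopen : IsOpen {p : E × ℝ | p.1 ∈ Ω ∧ v p.1 < p.2} := by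
    have := ((hv_cont.comp continuousOn_fst fun _ hp => hp.1).prodMk
      continuousOn_snd).isOpen_inter_preimage (hΩ.prod isOpen_univ) isOpen_lt_prod
    convert this using 1
    ext p; simp
  obtain ⟨f, hf⟩ := geometric_hahn_banach_open_point hv.convex_strict_epigraph hopen
    (x := (x₀, v x₀)) fun h => lt_irrefl _ h.2
  set φ := f.comp (.inl ℝ E ℝ)
  set c := f (0, 1)
  have hf_apply (y : E) (t : ℝ) : f (y, t) = φ y + t * c := by
    rw [← f.comp_inl_add_comp_inr, ← smul_eq_mul, ← map_smul]
    simp [φ]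
  have hsep : ∀ y ∈ Ω, ∀ t > v y, φ y + t * c < φ x₀ + v x₀ * c := fun y hy t ht => by
    simpa [hf_apply] using hf (y, t) ⟨hy, ht⟩
  have hc : 0 < -c := by linarith [hsep x₀ hx₀ (v x₀ + 1) (by linarith)]
  have hle : ∀ y ∈ Ω, φ y + v y * c ≤ φ x₀ + v x₀ * c := fun y hy => by
    refine le_of_forall_pos_lt_add fun ε hε => ?_
    have hshift : (v y + ε / -c) * c = v y * c - ε := by field_simp [(neg_pos.1 hc).ne]; ring
    have := hsep y hy (v y + ε / -c) (by linarith [div_pos hε hc])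
    linarith
  refine ⟨(-c)⁻¹ • φ, fun y hy => ?_⟩
  have : (-c)⁻¹ * (φ y - φ x₀) ≤ v y - v x₀ := by
    rw [inv_mul_le_iff₀ hc]; linarith [hle y hy]
  simp only [FunLike.coe_smul, Pi.smul_apply, map_sub, smul_eq_mul]
  linarith

end Subgradient

section Slopes

variable {E : Type*} [NormedAddCommGroup E] [InnerProductSpace ℝ E]

theorem convexOn_univ_norm_sub_sq (x₀ : E) : ConvexOn ℝ univ fun y => ‖y - x₀‖ ^ 2 := by
  have h : ConvexOn ℝ univ (fun y : E => ‖y‖ ^ 2) :=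
    convexOn_univ_norm.pow (fun _ _ => norm_nonneg _) 2
  simpa [Function.comp_def, sub_eq_neg_add] using h.translate_right (-x₀)

variable [ProperSpace E]

-- `w - ⟪p, ·⟫` is minimised over `closedBall x₀ r` at an interior point: on the sphere the
-- quadratic gain `ε r²` beats the linear loss `‖p - p₀‖ r`. Convexity makes that minimum global.
theorem ConvexOn.exists_mem_ball_subgradient {Ω : Set E} {w : E → ℝ} (hw : ConvexOn ℝ Ω w)
    {x₀ p₀ p : E} {r ε : ℝ} (hr : 0 < r) (hball : Metric.closedBall x₀ r ⊆ Ω)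
    (hw_cont : ContinuousOn w (Metric.closedBall x₀ r))
    (hstrong : ∀ y ∈ Ω, w x₀ + ⟪p₀, y - x₀⟫ + ε * ‖y - x₀‖ ^ 2 ≤ w y)
    (hp : ‖p - p₀‖ < ε * r) :
    ∃ x₁ ∈ Metric.ball x₀ r, ∀ y ∈ Ω, w x₁ + ⟪p, y - x₁⟫ ≤ w y := by
  set g := fun y => w y - ⟪p, y⟫
  have hg : ConvexOn ℝ Ω g := hw.sub ((innerₛₗ ℝ p).concaveOn hw.1)
  have hg_cont : ContinuousOn g (Metric.closedBall x₀ r) := hw_cont.sub (by fun_prop)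
  obtain ⟨x₁, hx₁, hmin⟩ :=
    (isCompact_closedBall x₀ r).exists_isMinOn ⟨x₀, Metric.mem_closedBall_self hr.le⟩ hg_cont
  have hx₁_mem : x₁ ∈ Metric.ball x₀ r := by
    refine lt_of_le_of_ne (Metric.mem_closedBall.1 hx₁) fun hdist => ?_
    rw [dist_eq_norm] at hdist
    have hstrong₁ := hstrong x₁ (hball hx₁)
    have hcs : -(‖p - p₀‖ * r) ≤ ⟪p₀ - p, x₁ - x₀⟫ := by
      rw [← hdist, norm_sub_rev p p₀]
      exact neg_le_of_abs_le (abs_real_inner_le_norm _ _)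
    have hle : g x₁ ≤ g x₀ := hmin (Metric.mem_closedBall_self hr.le)
    simp only [g, inner_sub_left, inner_sub_right, hdist] at hstrong₁ hcs hle
    linarith [mul_lt_mul_of_pos_right hp hr]
  refine ⟨x₁, hx₁_mem, fun y hy => ?_⟩
  have hlocal : IsLocalMinOn g Ω x₁ :=
    Filter.mem_of_superset (nhdsWithin_le_nhds (Metric.closedBall_mem_nhds_of_mem hx₁_mem))
      fun y hy => hmin hy
  have hle : g x₁ ≤ g y := IsMinOn.of_isLocalMinOn_of_convexOn (hball hx₁) hlocal hg hy
  simp only [g, inner_sub_right] at hle ⊢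
  linarith

end Slopes

section MongeAmpere

variable {n : ℕ} {Ω : Set (EuclideanSpace ℝ (Fin n))} {u w : EuclideanSpace ℝ (Fin n) → ℝ}

theorem subdiffImage_mono {S T : Set (EuclideanSpace ℝ (Fin n))} (h : S ⊆ T) :
    subdiffImage Ω u S ⊆ subdiffImage Ω u T :=
  biUnion_subset_biUnion_left h

-- A minimiser `xb` of `u - ⟪p, ·⟫` over the compact set `closure Ω` must lie in `{u < w}`:
-- otherwise `u xb - ⟪p, xb⟫ ≥ w xb - ⟪p, xb⟫ ≥ w x₁ - ⟪p, x₁⟫ > u x₁ - ⟪p, x₁⟫`.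
theorem mem_subdiffImage_of_subgradient (hΩ : Bornology.IsBounded Ω)
    (hu : ContinuousOn u (closure Ω)) (hw : ContinuousOn w (closure Ω))
    (hbd : ∀ x ∈ frontier Ω, w x ≤ u x) {x₁ p : EuclideanSpace ℝ (Fin n)} (hx₁ : x₁ ∈ Ω)
    (hlt : u x₁ < w x₁) (hp : ∀ y ∈ Ω, w x₁ + ⟪p, y - x₁⟫ ≤ w y) :
    p ∈ subdiffImage Ω u {x ∈ Ω | u x < w x} := by
  have hp_closure : ∀ y ∈ closure Ω, w x₁ + ⟪p, y - x₁⟫ ≤ w y :=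
    le_on_closure hp (by fun_prop) hw
  obtain ⟨xb, hxb, hmin⟩ := hΩ.isCompact_closure.exists_isMinOn
    ⟨x₁, subset_closure hx₁⟩ (hu.sub (by fun_prop) : ContinuousOn (fun y => u y - ⟪p, y⟫) _)
  have hmin' : ∀ y ∈ closure Ω, u xb + ⟪p, y - xb⟫ ≤ u y := fun y hy => by
    have : u xb - ⟪p, xb⟫ ≤ u y - ⟪p, y⟫ := hmin hy
    rw [inner_sub_right]; linarith
  refine mem_iUnion₂.2 ⟨xb, ?_, fun y hy => hmin' y (subset_closure hy)⟩
  by_contra hxb_notin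
  have hwu : w xb ≤ u xb := by
    by_cases hxbΩ : xb ∈ Ω
    · exact not_lt.1 fun h => hxb_notin ⟨hxbΩ, h⟩
    · exact hbd xb ⟨hxb, fun h => hxbΩ (interior_subset h)⟩
  have h₁ := hmin' x₁ (subset_closure hx₁)
  have h₂ := hp_closure xb hxb
  rw [inner_sub_right] at h₁ h₂
  linarith

theorem volume_subdiffImage_pos (hΩo : IsOpen Ω) (hΩb : Bornology.IsBounded Ω)
    (hu : ContinuousOn u (closure Ω)) (hw : ContinuousOn w (closure Ω)) (hw_conv : ConvexOn ℝ Ω w)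
    (hbd : ∀ x ∈ frontier Ω, w x ≤ u x) {x₀ p₀ : EuclideanSpace ℝ (Fin n)} {ε : ℝ}
    (hε : 0 < ε) (hx₀ : x₀ ∈ Ω) (hlt : u x₀ < w x₀)
    (hstrong : ∀ y ∈ Ω, w x₀ + ⟪p₀, y - x₀⟫ + ε * ‖y - x₀‖ ^ 2 ≤ w y) :
    0 < volume (subdiffImage Ω u {x ∈ Ω | u x < w x}) := by
  have hopen : IsOpen {x ∈ Ω | u x < w x} :=
    ((hu.mono subset_closure).prodMk (hw.mono subset_closure)).isOpen_inter_preimage hΩo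
      isOpen_lt_prod
  obtain ⟨r, hr, hball⟩ := Metric.nhds_basis_closedBall.mem_iff.1 (hopen.mem_nhds ⟨hx₀, hlt⟩)
  refine (Metric.measure_ball_pos volume p₀ (mul_pos hε hr)).trans_le (measure_mono ?_)
  intro p hp
  obtain ⟨x₁, hx₁, hsub⟩ := hw_conv.exists_mem_ball_subgradient hr (fun x hx => (hball hx).1)
    (hw.mono fun x hx => subset_closure (hball hx).1) hstrong (mem_ball_iff_norm.1 hp)
  obtain ⟨hx₁Ω, hx₁lt⟩ := hball (Metric.ball_subset_closedBall hx₁)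
  exact mem_subdiffImage_of_subgradient hΩb hu hw hbd hx₁Ω hx₁lt hsub

end MongeAmpere

theorem stmt_12 {n : ℕ} (Ω : Set (EuclideanSpace ℝ (Fin n)))
    (hΩo : IsOpen Ω) (hΩb : Bornology.IsBounded Ω)
    (u v : EuclideanSpace ℝ (Fin n) → ℝ)
    (hu_cont : ContinuousOn u (closure Ω)) (hv_cont : ContinuousOn v (closure Ω))
    (hv_conv : ConvexOn ℝ Ω v)
    (hbd : ∀ x ∈ frontier Ω, v x ≤ u x)
    (hmass : volume (subdiffImage Ω u {x ∈ Ω | u x < v x}) = 0) :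
    ∀ x ∈ Ω, v x ≤ u x := by
  by_contra! ⟨x₀, hx₀, hlt⟩
  obtain ⟨R, hR⟩ := hΩb.closure.subset_closedBall x₀
  obtain ⟨ε, hε, hεR⟩ := exists_pos_mul_lt (sub_pos.2 hlt) (R ^ 2)
  obtain ⟨φ, hφ⟩ := hv_conv.exists_subgradient hΩo (hv_cont.mono subset_closure) hx₀
  set w := fun y => v y + ε * ‖y - x₀‖ ^ 2 - ε * R ^ 2
  have hwv : ∀ y ∈ closure Ω, w y ≤ v y := fun y hy => by
    have hnorm : ‖y - x₀‖ ^ 2 ≤ R ^ 2 :=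
      pow_le_pow_left₀ (norm_nonneg _) (mem_closedBall_iff_norm.1 (hR hy)) 2
    simp only [w]
    linarith [mul_le_mul_of_nonneg_left hnorm hε.le]
  have hw_conv : ConvexOn ℝ Ω w := (hv_conv.add (((convexOn_univ_norm_sub_sq x₀).subset
    (subset_univ _) hv_conv.1).smul hε.le)).add_const _
  have hx₀w : w x₀ = v x₀ - ε * R ^ 2 := by simp [w]
  have hw_strong : ∀ y ∈ Ω,
      w x₀ + ⟪(InnerProductSpace.toDual ℝ _).symm φ, y - x₀⟫ + ε * ‖y - x₀‖ ^ 2 ≤ w y :=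
    fun y hy => by
      rw [hx₀w, InnerProductSpace.toDual_symm_apply]
      linarith [hφ y hy]
  have hpos := volume_subdiffImage_pos hΩo hΩb hu_cont (by fun_prop) hw_conv
    (fun x hx => (hwv x hx.1).trans (hbd x hx)) hε hx₀ (by rw [hx₀w]; linarith) hw_strong
  have hsub : {x ∈ Ω | u x < w x} ⊆ {x ∈ Ω | u x < v x} := fun x ⟨hxΩ, hxlt⟩ =>
    ⟨hxΩ, hxlt.trans_le (hwv x (subset_closure hxΩ))⟩
  exact hpos.ne' (measure_mono_null (subdiffImage_mono hsub) hmass)
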